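/- The gradient of the smooth Tchebycheff set scalarization with respect to solution x_k is a nonnegative combination of objective gradients: ∇_{x_k} G(X) = ∑_{i=1}^m w_i(X) ∇f_i(x_k), where w_i(X) = (λ_i e^{y_i/μ} / ∑_j e^{y_j/μ}) · (e^{−f_i(x_k)/μ_i} / ∑_{l=1}^K e^{−f_i(x_l)/μ_i}) ≥ 0 with y_i = λ_i·(−μ_i·log(∑_l e^{−f_i(x_l)/μ_i}) − z_i). -/

import Mathlib

/-- `y_i = λ_i (−μ_i log (∑_{l=1}^K exp(−f_i(x_l)/μ_i)) − z_i)`. -/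
noncomputable def yObj {α : Type*} {m K : ℕ}
    (f : Fin m → α → ℝ) (lam z : Fin m → ℝ) (μs : Fin m → ℝ) (X : Fin K → α) (i : Fin m) : ℝ :=
  lam i * (-μs i * Real.log (∑ l, Real.exp (-f i (X l) / μs i)) - z i)

/-- The smooth Tchebycheff set scalarization `G(X) = μ log (∑_{i=1}^m exp(y_i/μ))`. -/
noncomputable def stchSet {α : Type*} {m K : ℕ}
    (f : Fin m → α → ℝ) (lam z : Fin m → ℝ) (μ : ℝ) (μs : Fin m → ℝ) (X : Fin K → α) : ℝ :=
  μ * Real.log (∑ i, Real.exp (yObj f lam z μs X i / μ))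

/-- The weight
`w_i = (λ_i e^{y_i/μ} / ∑_j e^{y_j/μ}) (e^{−f_i(x_k)/μ_i} / ∑_l e^{−f_i(x_l)/μ_i})`. -/
noncomputable def wCoef {α : Type*} {m K : ℕ}
    (f : Fin m → α → ℝ) (lam z : Fin m → ℝ) (μ : ℝ) (μs : Fin m → ℝ)
    (X : Fin K → α) (k : Fin K) (i : Fin m) : ℝ :=
  (lam i * Real.exp (yObj f lam z μs X i / μ) / ∑ j, Real.exp (yObj f lam z μs X j / μ)) *
    (Real.exp (-f i (X k) / μs i) / ∑ l, Real.exp (-f i (X l) / μs i))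

theorem stchSet_gradient {n m K : ℕ}
    (f : Fin m → EuclideanSpace ℝ (Fin n) → ℝ) (hf : ∀ i, Differentiable ℝ (f i))
    (lam z : Fin m → ℝ) (hlam : ∀ i, 0 ≤ lam i)
    (μ : ℝ) (hμ : 0 < μ) (μs : Fin m → ℝ) (hμs : ∀ i, 0 < μs i)
    (X : Fin K → EuclideanSpace ℝ (Fin n)) (k : Fin K) :
    (∀ i, 0 ≤ wCoef f lam z μ μs X k i) ∧
    gradient (fun x => stchSet f lam z μ μs (Function.update X k x)) (X k) =
      ∑ i, wCoef f lam z μ μs X k i • gradient (f i) (X k) := by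
  have hw : ∀ i, 0 ≤ wCoef f lam z μ μs X k i := by
    intro i
    unfold wCoef
    have h1 : (0:ℝ) ≤ ∑ j, Real.exp (yObj f lam z μs X j / μ) :=
      Finset.sum_nonneg fun j _ => (Real.exp_pos _).le
    have h2 : (0:ℝ) ≤ ∑ l, Real.exp (-f i (X l) / μs i) :=
      Finset.sum_nonneg fun l _ => (Real.exp_pos _).le
    exact mul_nonneg (div_nonneg (mul_nonneg (hlam i) (Real.exp_pos _).le) h1)
      (div_nonneg (Real.exp_pos _).le h2)
  refine ⟨hw, ?_⟩
  rcases Nat.eq_zero_or_pos m with hm | hm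
  · subst hm
    have h0 : (fun x => stchSet f lam z μ μs (Function.update X k x)) =
        fun _ => μ * Real.log 0 := by
      funext x; simp [stchSet]
    rw [h0]
    simp [gradient_const]
  · -- main case
    have hm' : Nonempty (Fin m) := ⟨⟨0, hm⟩⟩
    set Di : Fin m → (EuclideanSpace ℝ (Fin n) →L[ℝ] ℝ) := fun i => fderiv ℝ (f i) (X k) with hDi
    set Ci : Fin m → ℝ := fun i =>
      ∑ l ∈ Finset.univ.erase k, Real.exp (-f i (X l) * (μs i)⁻¹) with hCi
    set Ei : Fin m → ℝ := fun i => Real.exp (-f i (X k) * (μs i)⁻¹) with hEi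
    have hCnn : ∀ i, 0 ≤ Ci i := fun i =>
      Finset.sum_nonneg fun l _ => (Real.exp_pos _).le
    have hECpos : ∀ i, 0 < Ei i + Ci i := fun i =>
      add_pos_of_pos_of_nonneg (Real.exp_pos _) (hCnn i)
    -- splitting the inner sum
    have hinner : ∀ (i : Fin m) (x : EuclideanSpace ℝ (Fin n)),
        (∑ l, Real.exp (-f i (Function.update X k x l) * (μs i)⁻¹)) =
          Real.exp (-f i x * (μs i)⁻¹) + Ci i := by
      intro i x
      rw [← Finset.add_sum_erase _ _ (Finset.mem_univ k), Function.update_self]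
      congr 1
      refine Finset.sum_congr rfl fun l hl => ?_
      rw [Function.update_of_ne (Finset.ne_of_mem_erase hl)]
    have hsum0 : ∀ i, (∑ l, Real.exp (-f i (X l) / μs i)) = Ei i + Ci i := by
      intro i
      have h := hinner i (X k)
      rw [Function.update_eq_self] at h
      rw [← h]
      exact Finset.sum_congr rfl fun l _ => by rw [div_eq_mul_inv]
    set Yv : Fin m → ℝ := fun i =>
      lam i * (-μs i * Real.log (Ei i + Ci i) - z i) with hYv
    have hyv : ∀ i, yObj f lam z μs X i = Yv i := by
      intro i; unfold yObj; rw [hsum0]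
    set Tv : ℝ := ∑ j, Real.exp (Yv j * μ⁻¹) with hTv
    have hTpos : 0 < Tv := Finset.sum_pos (fun j _ => Real.exp_pos _) Finset.univ_nonempty
    -- rewrite the global function
    have hGfun : (fun x => stchSet f lam z μ μs (Function.update X k x)) =
        fun x => μ * Real.log (∑ i, Real.exp
          ((lam i * (-μs i * Real.log (Real.exp (-f i x * (μs i)⁻¹) + Ci i) - z i)) * μ⁻¹)) := by
      funext x
      simp only [stchSet, yObj, div_eq_mul_inv, hinner]
    -- derivative of each building block
    have hA : ∀ i, HasFDerivAt
        (fun x : EuclideanSpace ℝ (Fin n) => Real.exp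
          ((lam i * (-μs i * Real.log (Real.exp (-f i x * (μs i)⁻¹) + Ci i) - z i)) * μ⁻¹))
        (Real.exp (Yv i * μ⁻¹) • (μ⁻¹ • (lam i • ((-μs i) •
          ((Ei i + Ci i)⁻¹ • (Ei i • ((μs i)⁻¹ • (-Di i)))))))) (X k) := by
      intro i
      have h1 : HasFDerivAt (fun x : EuclideanSpace ℝ (Fin n) => Real.exp (-f i x * (μs i)⁻¹) + Ci i)
          (Ei i • ((μs i)⁻¹ • (-Di i))) (X k) :=
        ((((hf i (X k)).hasFDerivAt.neg).mul_const ((μs i)⁻¹)).exp).add_const (Ci i)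
      have h2 := h1.log (hECpos i).ne'
      exact ((((h2.const_mul (-μs i)).sub_const (z i)).const_mul (lam i)).mul_const μ⁻¹).exp
    have hG : HasFDerivAt (fun x => stchSet f lam z μ μs (Function.update X k x))
        (μ • (Tv⁻¹ • ∑ i, Real.exp (Yv i * μ⁻¹) • (μ⁻¹ • (lam i • ((-μs i) •
          ((Ei i + Ci i)⁻¹ • (Ei i • ((μs i)⁻¹ • (-Di i))))))))) (X k) := by
      rw [hGfun]
      exact ((HasFDerivAt.fun_sum fun i _ => hA i).log hTpos.ne').const_mul μ
    -- identify the derivative with the weighted combination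
    have hD : (μ • (Tv⁻¹ • ∑ i, Real.exp (Yv i * μ⁻¹) • (μ⁻¹ • (lam i • ((-μs i) •
          ((Ei i + Ci i)⁻¹ • (Ei i • ((μs i)⁻¹ • (-Di i))))))))) =
        ∑ i, wCoef f lam z μ μs X k i • Di i := by
      rw [smul_smul, Finset.smul_sum]
      refine Finset.sum_congr rfl fun i _ => ?_
      rw [← neg_one_smul ℝ (Di i)]
      simp only [smul_smul]
      congr 1
      unfold wCoef
      rw [hyv i]
      have hTeq : (∑ j, Real.exp (yObj f lam z μs X j / μ)) = Tv := by
        rw [hTv]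
        exact Finset.sum_congr rfl fun j _ => by rw [hyv j, div_eq_mul_inv]
      rw [hTeq, hsum0 i]
      rw [show -f i (X k) / μs i = -f i (X k) * (μs i)⁻¹ from div_eq_mul_inv _ _,
        show Yv i / μ = Yv i * μ⁻¹ from div_eq_mul_inv _ _]
      have h1 : μ * μ⁻¹ = 1 := mul_inv_cancel₀ hμ.ne'
      have h2 : μs i * (μs i)⁻¹ = 1 := mul_inv_cancel₀ (hμs i).ne'
      rw [div_eq_mul_inv, div_eq_mul_inv]
      linear_combination
        (lam i * Real.exp (Yv i * μ⁻¹) * Tv⁻¹ * (Ei i * (Ei i + Ci i)⁻¹) *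
          (μs i * (μs i)⁻¹)) * h1 +
        (lam i * Real.exp (Yv i * μ⁻¹) * Tv⁻¹ * (Ei i * (Ei i + Ci i)⁻¹)) * h2
    rw [hG.hasGradientAt.gradient, hD, map_sum]
    simp only [map_smul]
    rfl
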